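/- Let k > 0, ω ≠ 0, and σ₂ ∈ ℝ with σ₂² < 2k. Define V(x,y) = [(ω²+1)/(2k−σ₂²) + k/(2ω²)]·x² + (1/ω²)·xy + [(ω²+1)/(ω²(2k−σ₂²))]·y², and LV(x,y) = y·V_x + (−ω²x − ky)·V_y + (σ₂²y²/2)·V_yy. Then V is positive definite and LV(x,y) ≤ −(x² + y²) for all (x,y) ∈ ℝ². -/
import Mathlib


noncomputable def V9 (k ω σ₂ : ℝ) : ℝ → ℝ → ℝ := fun x y =>
  ((ω ^ 2 + 1) / (2 * k - σ₂ ^ 2) + k / (2 * ω ^ 2)) * x ^ 2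
    + (1 / ω ^ 2) * x * y
    + ((ω ^ 2 + 1) / (ω ^ 2 * (2 * k - σ₂ ^ 2))) * y ^ 2

noncomputable def LV9 (k ω σ₂ : ℝ) (x y : ℝ) : ℝ :=
  y * deriv (fun x' => V9 k ω σ₂ x' y) x
    + (-(ω ^ 2) * x - k * y) * deriv (fun y' => V9 k ω σ₂ x y') y
    + σ₂ ^ 2 * y ^ 2 / 2 * deriv (deriv (fun y' => V9 k ω σ₂ x y')) y

private lemma quad_hasDeriv (a b c t : ℝ) :
    HasDerivAt (fun s : ℝ => a * s ^ 2 + b * s + c) (2 * a * t + b) t := by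
  have h1 : HasDerivAt (fun s : ℝ => a * s ^ 2) (a * (2 * t)) t :=
    (hasDerivAt_pow 2 t).const_mul a |>.congr_deriv (by ring)
  have h2 : HasDerivAt (fun s : ℝ => b * s) b t := by
    simpa using (hasDerivAt_id t).const_mul b
  have := (h1.add h2).add_const c
  simpa using this.congr_deriv (by ring)

theorem stmt_9 (k ω σ₂ : ℝ) (hk : k > 0) (hω : ω ≠ 0) (hσ : σ₂ ^ 2 < 2 * k) :
    (∀ x y : ℝ, (x, y) ≠ (0, 0) → V9 k ω σ₂ x y > 0) ∧
    (∀ x y : ℝ, LV9 k ω σ₂ x y ≤ -(x ^ 2 + y ^ 2)) := by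
  have hd : 2 * k - σ₂ ^ 2 > 0 := by linarith
  have hω2 : ω ^ 2 > 0 := by positivity
  set A := (ω ^ 2 + 1) / (2 * k - σ₂ ^ 2) + k / (2 * ω ^ 2) with hA
  set B := 1 / ω ^ 2 with hB
  set C := (ω ^ 2 + 1) / (ω ^ 2 * (2 * k - σ₂ ^ 2)) with hC
  have hApos : A > 0 := by positivity
  have hCpos : C > 0 := by positivity
  constructor
  · intro x y hxy
    have h : x ≠ 0 ∨ y ≠ 0 := by
      by_contra h
      push_neg at h
      exact hxy (by simp [h.1, h.2])
    have h4 : 4 * A * C - B ^ 2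
        = (4 * (ω ^ 2 + 1) ^ 2 * ω ^ 2
            + (2 * k * ω ^ 2 + σ₂ ^ 2) * (2 * k - σ₂ ^ 2))
          / (ω ^ 4 * (2 * k - σ₂ ^ 2) ^ 2) := by
      rw [hA, hB, hC]; field_simp; ring
    have hσ2 : 2 * k * ω ^ 2 + σ₂ ^ 2 > 0 := by positivity
    have h4pos : 4 * A * C - B ^ 2 > 0 := by rw [h4]; positivity
    have hVeq : V9 k ω σ₂ x y = A * x ^ 2 + B * x * y + C * y ^ 2 := by
      simp only [V9, hA, hB, hC]
    rw [hVeq]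
    by_cases hy : y = 0
    · rcases h with hx | hy'
      · subst hy; simpa using mul_pos hApos (sq_pos_of_ne_zero hx)
      · exact absurd hy hy'
    · nlinarith [sq_nonneg (2 * A * x + B * y),
        mul_pos h4pos (sq_pos_of_ne_zero hy), hApos]
  · intro x y
    have hx1 : deriv (fun x' => V9 k ω σ₂ x' y) x = 2 * A * x + B * y := by
      have : (fun x' => V9 k ω σ₂ x' y)
          = fun x' => A * x' ^ 2 + (B * y) * x' + C * y ^ 2 := by
        funext x'; simp [V9]; ring
      rw [this, (quad_hasDeriv A (B * y) (C * y ^ 2) x).deriv]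
    have hy1fun : deriv (fun y' => V9 k ω σ₂ x y')
        = fun y' => 2 * C * y' + B * x := by
      funext t
      have : (fun y' => V9 k ω σ₂ x y')
          = fun y' => C * y' ^ 2 + (B * x) * y' + A * x ^ 2 := by
        funext y'; simp [V9]; ring
      rw [this, (quad_hasDeriv C (B * x) (A * x ^ 2) t).deriv]
    have hy1 : deriv (fun y' => V9 k ω σ₂ x y') y = 2 * C * y + B * x := by
      rw [hy1fun]
    have hy2 : deriv (deriv (fun y' => V9 k ω σ₂ x y')) y = 2 * C := by
      rw [hy1fun]
      have : HasDerivAt (fun y' : ℝ => 2 * C * y' + B * x) (2 * C) y := by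
        simpa using ((hasDerivAt_id y).const_mul (2 * C)).add_const (B * x)
      exact this.deriv
    rw [LV9, hx1, hy1, hy2]
    have hc1 : 2 * A - 2 * C * ω ^ 2 - k * B = 0 := by
      rw [hA, hB, hC]; field_simp; ring
    have hc2 : -(ω ^ 2) * B = -1 := by
      rw [hB]; field_simp
    have hc3 : B - 2 * k * C + σ₂ ^ 2 * C = -1 := by
      rw [hB, hC]; field_simp; ring
    have : y * (2 * A * x + B * y) + (-(ω ^ 2) * x - k * y) * (2 * C * y + B * x)
        + σ₂ ^ 2 * y ^ 2 / 2 * (2 * C) = -(x ^ 2 + y ^ 2) := by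
      linear_combination x * y * hc1 + x ^ 2 * hc2 + y ^ 2 * hc3
    linarith [this]
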